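/- arXiv:2310.14720 — 2 statements merged into one kernel-verified Lean document; each statement's English description precedes it below -/
import Mathlib

section
/- For every λ ∈ ℝ, the Yeo-Johnson transformation f_YJ^λ is differentiable on all of ℝ, with derivative (f_YJ^λ)'(x) = (x+1)^{λ−1} for x ≥ 0 and (f_YJ^λ)'(x) = (1−x)^{1−λ} for x < 0; in particular, f_YJ^λ is differentiable at 0 with (f_YJ^λ)'(0) = 1. -/
noncomputable def yeoJohnson (l x : ℝ) : ℝ :=
  if 0 ≤ x then
    if l ≠ 0 then ((x + 1) ^ l - 1) / l else Real.log (x + 1)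
  else
    if l ≠ 2 then ((1 - x) ^ (2 - l) - 1) / (l - 2) else -Real.log (1 - x)

noncomputable def yjPos (l x : ℝ) : ℝ :=
  if l ≠ 0 then ((x + 1) ^ l - 1) / l else Real.log (x + 1)

noncomputable def yjNeg (l x : ℝ) : ℝ :=
  if l ≠ 2 then ((1 - x) ^ (2 - l) - 1) / (l - 2) else -Real.log (1 - x)

lemma yjPos_hasDerivAt (l x : ℝ) (hx : -1 < x) :
    HasDerivAt (yjPos l) ((x + 1) ^ (l - 1)) x := by
  have h1 : (0:ℝ) < x + 1 := by linarith
  have hb : HasDerivAt (fun y : ℝ => y + 1) 1 x := (hasDerivAt_id x).add_const 1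
  unfold yjPos
  by_cases hl : l = 0
  · simp only [hl, ne_eq, not_true_eq_false, if_false]
    have := (Real.hasDerivAt_log (ne_of_gt h1)).comp x hb
    refine this.congr_deriv (Eq.symm ?_)
    rw [Real.rpow_sub h1, Real.rpow_zero, Real.rpow_one]
    field_simp
  · simp only [ne_eq, hl, not_false_eq_true, if_true]
    have := ((hb.rpow_const (p := l) (Or.inl (ne_of_gt h1))).sub_const 1).div_const l
    refine this.congr_deriv (Eq.symm ?_)
    field_simp

lemma yjNeg_hasDerivAt (l x : ℝ) (hx : x < 1) :
    HasDerivAt (yjNeg l) ((1 - x) ^ (1 - l)) x := by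
  have h1 : (0:ℝ) < 1 - x := by linarith
  have hb : HasDerivAt (fun y : ℝ => 1 - y) (-1) x := (hasDerivAt_id x).const_sub 1
  unfold yjNeg
  by_cases hl : l = 2
  · simp only [hl, ne_eq, not_true_eq_false, if_false]
    have := ((Real.hasDerivAt_log (ne_of_gt h1)).comp x hb).neg
    refine this.congr_deriv (Eq.symm ?_)
    rw [show (1:ℝ) - 2 = -1 by norm_num, Real.rpow_neg_one]
    field_simp
  · simp only [ne_eq, hl, not_false_eq_true, if_true]
    have := ((hb.rpow_const (p := 2 - l) (Or.inl (ne_of_gt h1))).sub_const 1).div_const (l - 2)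
    refine this.congr_deriv (Eq.symm ?_)
    rw [show (2:ℝ) - l - 1 = 1 - l by ring]
    have h2 : l - 2 ≠ 0 := sub_ne_zero.mpr hl
    field_simp
    ring

lemma yjPos_zero (l : ℝ) : yjPos l 0 = 0 := by
  unfold yjPos
  by_cases hl : l = 0 <;> simp [hl, Real.one_rpow]

lemma yjNeg_zero (l : ℝ) : yjNeg l 0 = 0 := by
  unfold yjNeg
  by_cases hl : l = 2 <;> simp [hl, Real.one_rpow]

lemma yj_zero (l : ℝ) : yeoJohnson l 0 = 0 := by
  unfold yeoJohnson
  by_cases hl : l = 0 <;> simp [hl, Real.one_rpow]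

lemma yj_hasDerivAt_zero (l : ℝ) : HasDerivAt (yeoJohnson l) 1 0 := by
  have hpos : HasDerivWithinAt (yeoJohnson l) 1 (Set.Ici 0) 0 := by
    have h := (yjPos_hasDerivAt l 0 (by norm_num)).hasDerivWithinAt (s := Set.Ici 0)
    rw [show (0:ℝ) + 1 = 1 by ring, Real.one_rpow] at h
    refine h.congr (fun y hy => ?_) ?_
    · simp only [yeoJohnson, yjPos, if_pos (Set.mem_Ici.mp hy)]
    · rw [yj_zero, yjPos_zero]
  have hneg : HasDerivWithinAt (yeoJohnson l) 1 (Set.Iic 0) 0 := by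
    have h := (yjNeg_hasDerivAt l 0 (by norm_num)).hasDerivWithinAt (s := Set.Iic 0)
    rw [show (1:ℝ) - 0 = 1 by ring, Real.one_rpow] at h
    refine h.congr (fun y hy => ?_) ?_
    · rcases lt_or_eq_of_le (Set.mem_Iic.mp hy) with h' | h'
      · simp only [yeoJohnson, yjNeg, if_neg (not_le.mpr h')]
      · rw [h', yj_zero, yjNeg_zero]
    · rw [yj_zero, yjNeg_zero]
  have := hneg.union hpos
  rw [Set.Iic_union_Ici, hasDerivWithinAt_univ] at this
  exact this

lemma yj_hasDerivAt_pos (l x : ℝ) (hx : 0 < x) :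
    HasDerivAt (yeoJohnson l) ((x + 1) ^ (l - 1)) x := by
  refine (yjPos_hasDerivAt l x (by linarith)).congr_of_eventuallyEq ?_
  filter_upwards [Ioi_mem_nhds hx] with y hy
  simp only [yeoJohnson, yjPos, if_pos (le_of_lt (Set.mem_Ioi.mp hy))]

lemma yj_hasDerivAt_neg (l x : ℝ) (hx : x < 0) :
    HasDerivAt (yeoJohnson l) ((1 - x) ^ (1 - l)) x := by
  refine (yjNeg_hasDerivAt l x (by linarith)).congr_of_eventuallyEq ?_
  filter_upwards [Iio_mem_nhds hx] with y hy
  simp only [yeoJohnson, yjNeg, if_neg (not_le.mpr (Set.mem_Iio.mp hy))]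

/-- For every `λ`, the Yeo-Johnson transformation is differentiable on all of
`ℝ`, with derivative `(x+1)^(λ-1)` for `x ≥ 0` and `(1-x)^(1-λ)` for `x < 0`;
in particular it is differentiable at `0` with derivative `1`. -/
theorem stmt_5 (l : ℝ) :
    Differentiable ℝ (yeoJohnson l) ∧
    (∀ x : ℝ, 0 ≤ x → deriv (yeoJohnson l) x = (x + 1) ^ (l - 1)) ∧
    (∀ x : ℝ, x < 0 → deriv (yeoJohnson l) x = (1 - x) ^ (1 - l)) ∧
    HasDerivAt (yeoJohnson l) 1 0 := by
  have key : ∀ x : ℝ, 0 ≤ x → HasDerivAt (yeoJohnson l) ((x + 1) ^ (l - 1)) x := by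
    intro x hx
    rcases lt_or_eq_of_le hx with h | h
    · exact yj_hasDerivAt_pos l x h
    · rw [← h, show (0:ℝ) + 1 = 1 by ring, Real.one_rpow]
      exact yj_hasDerivAt_zero l
  refine ⟨fun x => ?_, fun x hx => (key x hx).deriv, fun x hx => (yj_hasDerivAt_neg l x hx).deriv,
    yj_hasDerivAt_zero l⟩
  rcases le_or_gt 0 x with h | h
  · exact (key x h).differentiableAt
  · exact (yj_hasDerivAt_neg l x h).differentiableAt
end

section
/- Let μ ∈ ℝ, β > 0, α ∈ [0,1], m ∈ ℝ, s > 0 and λ ∈ ℝ, and define the global-aware EDAIN coordinate transformation T : ℝ → ℝ by T(x) = f_YJ^λ((h_1(x) − m)/s), where h_1(x) = α·(β·tanh((x − μ)/β) + μ) + (1 − α)·x. Then T is strictly monotonically increasing on ℝ: for all x, x' ∈ ℝ, x < x' implies T(x) < T(x'). Hence the global-aware EDAIN transformation preserves the relative ordering of observations in each coordinate. -/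
/-- The outlier mitigation map: the convex combination, with weight `α`, of the
smoothed winsorization `β·tanh((x − μ)/β) + μ` and the identity. -/
noncomputable def outlierMitigation (μ β α x : ℝ) : ℝ :=
  α * (β * Real.tanh ((x - μ) / β) + μ) + (1 - α) * x

/-- The global-aware EDAIN coordinate transformation: outlier mitigation,
then shift by `m`, scaling by `1/s`, and the Yeo-Johnson power transform. -/
noncomputable def edainGlobal (μ β α m s l x : ℝ) : ℝ :=
  yeoJohnson l ((outlierMitigation μ β α x - m) / s)

open Set

namespace Real

theorem strictMono_tanh : StrictMono tanh := fun x y hxy => by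
  have mem (z : ℝ) : tanh z ∈ Ioo (-1) 1 := ⟨neg_one_lt_tanh z, tanh_lt_one z⟩
  rwa [← artanh_lt_artanh_iff (mem x) (mem y), artanh_tanh, artanh_tanh]

end Real

theorem strictMono_sub_div {K : Type*} [Field K] [LinearOrder K] [IsStrictOrderedRing K]
    (c : K) {d : K} (hd : 0 < d) : StrictMono fun x => (x - c) / d :=
  fun _ _ h => div_lt_div_of_pos_right (sub_lt_sub_right h c) hd

noncomputable def shiftedBoxCox (l y : ℝ) : ℝ :=
  if l ≠ 0 then ((y + 1) ^ l - 1) / l else Real.log (y + 1)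

theorem shiftedBoxCox_zero (l : ℝ) : shiftedBoxCox l 0 = 0 := by
  simp [shiftedBoxCox]

theorem strictMonoOn_shiftedBoxCox (l : ℝ) : StrictMonoOn (shiftedBoxCox l) (Ioi (-1)) := by
  intro x (hx : -1 < x) y _ hxy
  have hx1 : 0 < x + 1 := by linarith
  have hxy1 : x + 1 < y + 1 := by linarith
  unfold shiftedBoxCox
  rcases lt_trichotomy l 0 with hl | rfl | hl
  · simp only [ne_eq, hl.ne, not_false_eq_true, if_true]
    exact div_lt_div_of_neg_of_lt hl (by linarith [Real.rpow_lt_rpow_of_neg hx1 hxy1 hl])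
  · simpa using Real.log_lt_log hx1 hxy1
  · simp only [ne_eq, hl.ne', not_false_eq_true, if_true]
    exact div_lt_div_of_pos_right (by linarith [Real.rpow_lt_rpow hx1.le hxy1 hl]) hl

theorem yeoJohnson_of_nonneg (l : ℝ) {x : ℝ} (hx : 0 ≤ x) :
    yeoJohnson l x = shiftedBoxCox l x :=
  if_pos hx

theorem yeoJohnson_of_nonpos (l : ℝ) {x : ℝ} (hx : x ≤ 0) :
    yeoJohnson l x = -shiftedBoxCox (2 - l) (-x) := by
  rcases hx.lt_or_eq with hx | rfl
  · rw [yeoJohnson, if_neg hx.not_ge, shiftedBoxCox, neg_add_eq_sub]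
    rcases eq_or_ne l 2 with rfl | hl
    · simp
    · rw [if_pos hl, if_pos (sub_ne_zero.2 hl.symm), ← neg_sub l 2, div_neg, neg_neg]
  · rw [yeoJohnson_of_nonneg l le_rfl, neg_zero, shiftedBoxCox_zero, shiftedBoxCox_zero, neg_zero]

theorem strictMono_yeoJohnson (l : ℝ) : StrictMono (yeoJohnson l) := by
  refine StrictMonoOn.Iic_union_Ici (a := 0) ?_ ?_
  · intro x (hx : x ≤ 0) y (hy : y ≤ 0) hxy
    rw [yeoJohnson_of_nonpos l hx, yeoJohnson_of_nonpos l hy, neg_lt_neg_iff]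
    exact strictMonoOn_shiftedBoxCox (2 - l) (mem_Ioi.2 (by linarith)) (mem_Ioi.2 (by linarith))
      (neg_lt_neg hxy)
  · intro x (hx : 0 ≤ x) y (hy : 0 ≤ y) hxy
    rw [yeoJohnson_of_nonneg l hx, yeoJohnson_of_nonneg l hy]
    exact strictMonoOn_shiftedBoxCox l (mem_Ioi.2 (by linarith)) (mem_Ioi.2 (by linarith)) hxy

theorem strictMono_smoothedWinsorization (μ : ℝ) {β : ℝ} (hβ : 0 < β) :
    StrictMono fun x => β * Real.tanh ((x - μ) / β) + μ :=
  ((Real.strictMono_tanh.comp (strictMono_sub_div μ hβ)).const_mul hβ).add_const μ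

theorem strictMono_outlierMitigation (μ : ℝ) {β α : ℝ} (hβ : 0 < β) (hα : α ∈ Icc (0 : ℝ) 1) :
    StrictMono (outlierMitigation μ β α) := by
  have hw := strictMono_smoothedWinsorization μ hβ
  rcases hα.2.lt_or_eq with hα1 | rfl
  · exact (hw.monotone.const_mul hα.1).add_strictMono (strictMono_id.const_mul (sub_pos.2 hα1))
  · convert hw using 2 with x
    simp [outlierMitigation]

/-- For `μ ∈ ℝ`, `β > 0`, `α ∈ [0,1]`, `m ∈ ℝ`, `s > 0` and `λ ∈ ℝ`, the
global-aware EDAIN coordinate transformation is strictly monotonically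
increasing on `ℝ`: `x < x'` implies `T(x) < T(x')`. Hence it preserves the
relative ordering of the observations in each coordinate. -/
theorem stmt_12 (μ β α m s l : ℝ) (hβ : 0 < β) (hα : α ∈ Set.Icc (0 : ℝ) 1)
    (hs : 0 < s) :
    StrictMono (edainGlobal μ β α m s l) ∧
    (∀ x x' : ℝ, x < x' → edainGlobal μ β α m s l x < edainGlobal μ β α m s l x') := by
  have h : StrictMono (edainGlobal μ β α m s l) :=
    (strictMono_yeoJohnson l).comp
      ((strictMono_sub_div m hs).comp (strictMono_outlierMitigation μ hβ hα))
  exact ⟨h, fun _ _ hxy => h hxy⟩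
end
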